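/- For any Parikh vector P with at least two nonzero entries and total length n, the diameter of the configuration graph G(P) is at least n − max_{i∈Σ} P[i]; in particular there exist two words with Parikh vector P at 2-swap distance exactly n − max_i P[i]. -/

import Mathlib

/-!
Sort the letters of `P` into a monotone word `w` and let `v` be `w` rotated cyclically by
`m = max P`. No letter occurs more than `m` times, so `w k < v k` at each of the first `n - m`
positions. For a fixed pair `w, v` the number of positions `k` with `w k < v k ≤ x k` changes by
at most one under a 2-swap of `x`; it is `0` at `w` and `#{k | w k < v k}` at `v`, which gives
`d(w, v) ≥ n - m`.

Conversely, if `P a = m`, then any two words `u ≠ v` can be brought together by swapping a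
position `i` where `u` is wrong and `u i ≠ a` with a position `j` where `u j` is wrong and
`v j = u i`: this never creates a new wrong non-`a` position and destroys one, so
`d(u, v) ≤ #{k | u k ≠ a} = n - m`.
-/

/-- The Parikh vector of a word `w : Fin n → Fin σ`. -/
def parikh {n σ : ℕ} (w : Fin n → Fin σ) : Fin σ → ℕ :=
  fun a => (Finset.univ.filter fun i => w i = a).card

/-- Words of length `n` over alphabet `Fin σ` with Parikh vector `P`. -/
abbrev Words (n σ : ℕ) (P : Fin σ → ℕ) := {w : Fin n → Fin σ // parikh w = P}

/-- `u` is obtained from `w` by a single 2-swap. -/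
def isSwap {n σ : ℕ} (w u : Fin n → Fin σ) : Prop :=
  ∃ i j : Fin n, i ≠ j ∧ w i ≠ w j ∧ u = w ∘ Equiv.swap i j

/-- The configuration graph `G(P)`. -/
def configGraph (n σ : ℕ) (P : Fin σ → ℕ) : SimpleGraph (Words n σ P) :=
  SimpleGraph.fromRel fun w u => isSwap w.1 u.1

open Finset

section Parikh

variable {n σ : ℕ}

theorem parikh_comp_perm (w : Fin n → Fin σ) (e : Equiv.Perm (Fin n)) :
    parikh (w ∘ e) = parikh w := by
  funext x
  simp only [parikh, ← Fintype.card_subtype]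
  exact Fintype.card_congr (e.subtypeEquiv fun _ => Iff.rfl)

theorem card_filter_ne_eq_sub_parikh (w : Fin n → Fin σ) (a : Fin σ) :
    #{k | w k ≠ a} = n - parikh w a := by
  have := card_filter_add_card_filter_not (s := univ) (fun k => w k = a)
  rw [card_univ, Fintype.card_fin] at this
  simp only [parikh, ne_eq]
  omega

theorem exists_eq_ne_of_parikh_eq {u v : Fin n → Fin σ} (h : parikh u = parikh v) {i : Fin n}
    (hi : u i ≠ v i) : ∃ j, v j = u i ∧ u j ≠ u i := by
  by_contra! hcon
  have hsub : univ.filter (fun k => v k = u i) ⊆ univ.filter (fun k => u k = u i) :=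
    monotone_filter_right _ fun k _ hk => hcon k hk
  have heq := eq_of_subset_of_card_le hsub (congrFun h (u i)).le
  have : i ∈ univ.filter (fun k => v k = u i) := by rw [heq]; simp
  exact hi (mem_filter.mp this).2.symm

theorem exists_monotone_parikh_eq (P : Fin σ → ℕ) :
    ∃ w : Fin (∑ x, P x) → Fin σ, Monotone w ∧ parikh w = P := by
  let w₀ : Fin (∑ x, P x) → Fin σ := fun k => (finSigmaFinEquiv.symm k).1
  have hw₀ : parikh w₀ = P := by
    funext x
    rw [parikh, ← Fintype.card_subtype, ← Fintype.card_fin (P x)]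
    exact Fintype.card_congr
      ((finSigmaFinEquiv.symm.subtypeEquiv fun _ => Iff.rfl).trans (Equiv.sigmaSubtype x))
  exact ⟨w₀ ∘ Tuple.sort w₀, Tuple.monotone_sort w₀, (parikh_comp_perm _ _).trans hw₀⟩

theorem Monotone.lt_of_parikh_le {w : Fin n → Fin σ} (hw : Monotone w) {m : ℕ}
    (hm : ∀ x, parikh w x ≤ m) {k l : Fin n} (hkl : (k : ℕ) + m ≤ l) : w k < w l := by
  refine (hw (Fin.le_def.mpr (by omega))).lt_of_ne fun heq => ?_
  have hsub : Icc k l ⊆ univ.filter (fun x => w x = w k) := fun x hx => by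
    rw [mem_Icc] at hx
    simpa using le_antisymm (heq ▸ hw hx.2) (hw hx.1)
  have := (card_le_card hsub).trans (hm (w k))
  rw [Fin.card_Icc] at this
  omega

theorem exists_perm_card_lt {w : Fin n → Fin σ} (hw : Monotone w) {m : ℕ}
    (hm : ∀ x, parikh w x ≤ m) : ∃ π : Equiv.Perm (Fin n), n - m ≤ #{k | w k < w (π k)} := by
  by_cases hmn : m < n
  · refine ⟨finCycle ⟨m, hmn⟩, ?_⟩
    calc n - m = #{k : Fin n | k < n - m} := by rw [Fin.card_filter_val_lt]; omega
      _ ≤ _ := card_le_card <| monotone_filter_right _ fun k _ hk => hw.lt_of_parikh_le hm ?_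
    rw [finCycle_apply, Fin.val_add, Nat.mod_eq_of_lt (by simp only at hk ⊢; omega)]
  · exact ⟨1, by omega⟩

end Parikh

theorem card_filter_le_comp_swap {ι α : Type*} [DecidableEq ι] [LinearOrder α] (s : Finset ι)
    (t f : ι → α) (i j : ι) :
    #{k ∈ s | t k ≤ f (Equiv.swap i j k)} ≤ #{k ∈ s | t k ≤ f k} + 1 := by
  wlog hij : f i ≤ f j generalizing i j
  · simpa only [Equiv.swap_comm] using this j i (le_of_not_ge hij)
  have hle : ∀ k ≠ i, f (Equiv.swap i j k) ≤ f k := by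
    intro k hki
    rcases eq_or_ne k j with rfl | hkj
    · simpa using hij
    · rw [Equiv.swap_apply_of_ne_of_ne hki hkj]
  calc #{k ∈ s | t k ≤ f (Equiv.swap i j k)}
      ≤ #(insert i {k ∈ s | t k ≤ f k}) := card_le_card fun k hk => by
        rw [mem_filter] at hk
        rcases eq_or_ne k i with rfl | hki
        · exact mem_insert_self _ _
        · exact mem_insert_of_mem (mem_filter.mpr ⟨hk.1, hk.2.trans (hle k hki)⟩)
    _ ≤ _ := card_insert_le _ _

theorem SimpleGraph.Walk.le_add_length {V : Type*} {G : SimpleGraph V} (φ : V → ℕ)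
    (hφ : ∀ x y, G.Adj x y → φ y ≤ φ x + 1) {u v : V} (p : G.Walk u v) :
    φ v ≤ φ u + p.length := by
  induction p with
  | nil => simp
  | cons h _ ih =>
    rw [length_cons]
    linarith [hφ _ _ h]

section ConfigGraph

variable {n σ : ℕ} {P : Fin σ → ℕ}

theorem exists_swap_of_adj {u v : Words n σ P} (h : (configGraph n σ P).Adj u v) :
    ∃ i j, v.1 = u.1 ∘ Equiv.swap i j := by
  obtain ⟨-, ⟨i, j, -, -, h⟩ | ⟨i, j, -, -, h⟩⟩ := h
  · exact ⟨i, j, h⟩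
  · refine ⟨i, j, ?_⟩
    ext k
    simp [h]

theorem adj_comp_swap (u : Words n σ P) {i j : Fin n} (h : u.1 i ≠ u.1 j) :
    (configGraph n σ P).Adj u ⟨u.1 ∘ Equiv.swap i j, (parikh_comp_perm _ _).trans u.2⟩ := by
  have hij : i ≠ j := fun hij => h (hij ▸ rfl)
  refine ⟨fun heq => h ?_, Or.inl ⟨i, j, hij, h, rfl⟩⟩
  simpa using (congrFun (congrArg Subtype.val heq) j).symm

theorem card_lt_le_length {u v : Words n σ P} (p : (configGraph n σ P).Walk u v) :
    #{k | u.1 k < v.1 k} ≤ p.length := by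
  let φ (x : Words n σ P) : ℕ := #{k ∈ {k | u.1 k < v.1 k} | v.1 k ≤ x.1 k}
  have hφ : ∀ x y, (configGraph n σ P).Adj x y → φ y ≤ φ x + 1 := by
    intro x y hxy
    obtain ⟨i, j, hy⟩ := exists_swap_of_adj hxy
    simp only [φ, hy]
    exact card_filter_le_comp_swap _ _ _ i j
  have hu : φ u = 0 := card_eq_zero.mpr <| filter_eq_empty_iff.mpr fun k hk =>
    not_le.mpr (mem_filter.mp hk).2
  have hv : φ v = #{k | u.1 k < v.1 k} := congrArg card <| filter_true_of_mem fun _ _ => le_rfl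
  simpa [hu, hv] using p.le_add_length φ hφ

def misplaced (a : Fin σ) (u v : Fin n → Fin σ) : Finset (Fin n) :=
  {k | u k ≠ v k ∧ u k ≠ a}

theorem misplaced_nonempty (a : Fin σ) {u v : Fin n → Fin σ} (h : parikh u = parikh v)
    (huv : u ≠ v) : (misplaced a u v).Nonempty := by
  obtain ⟨i, hi⟩ := Function.ne_iff.mp huv
  by_cases hia : u i = a
  · obtain ⟨j, hvj, huj⟩ := exists_eq_ne_of_parikh_eq h hi
    exact ⟨j, by simp [misplaced, hvj, huj, ← hia]⟩
  · exact ⟨i, by simp [misplaced, hi, hia]⟩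

theorem misplaced_comp_swap_ssubset {a : Fin σ} {u v : Fin n → Fin σ} {i j : Fin n}
    (hi : i ∈ misplaced a u v) (hvj : v j = u i) (huj : u j ≠ u i) :
    misplaced a (u ∘ Equiv.swap i j) v ⊂ misplaced a u v := by
  simp only [misplaced, mem_filter, mem_univ, true_and] at hi
  rw [ssubset_iff_of_subset]
  · by_cases hja : u j = a
    · exact ⟨i, by simp [misplaced, hi], by simp [misplaced, hja]⟩
    · exact ⟨j, by simp [misplaced, hvj, huj, hja], by simp [misplaced, hvj]⟩
  · intro k hk
    simp only [misplaced, mem_filter, mem_univ, true_and, Function.comp_apply] at hk ⊢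
    rcases eq_or_ne k i with rfl | hki
    · exact hi
    rcases eq_or_ne k j with rfl | hkj
    · simp [hvj] at hk
    · rwa [Equiv.swap_apply_of_ne_of_ne hki hkj] at hk

theorem exists_adj_card_misplaced_lt (a : Fin σ) {u v : Words n σ P} (huv : u ≠ v) :
    ∃ u', (configGraph n σ P).Adj u u' ∧ #(misplaced a u'.1 v.1) < #(misplaced a u.1 v.1) := by
  have hP : parikh u.1 = parikh v.1 := u.2.trans v.2.symm
  obtain ⟨i, hi⟩ := misplaced_nonempty a hP (Subtype.coe_injective.ne huv)
  obtain ⟨j, hvj, huj⟩ :=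
    exists_eq_ne_of_parikh_eq hP (by simp only [misplaced, mem_filter] at hi; exact hi.2.1)
  exact ⟨_, adj_comp_swap u (Ne.symm huj), card_lt_card (misplaced_comp_swap_ssubset hi hvj huj)⟩

theorem exists_walk_length_le_card_misplaced (a : Fin σ) (u v : Words n σ P) :
    ∃ p : (configGraph n σ P).Walk u v, p.length ≤ #(misplaced a u.1 v.1) := by
  induction hd : #(misplaced a u.1 v.1) using Nat.strong_induction_on generalizing u with
  | _ d ih =>
  by_cases huv : u = v
  · subst huv
    exact ⟨.nil, by simp⟩
  obtain ⟨u', hadj, hlt⟩ := exists_adj_card_misplaced_lt a huv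
  obtain ⟨p, hp⟩ := ih _ (hd ▸ hlt) u' rfl
  exact ⟨.cons hadj p, by rw [SimpleGraph.Walk.length_cons]; omega⟩

theorem configGraph_preconnected [Nonempty (Fin σ)] : (configGraph n σ P).Preconnected :=
  fun u v => ⟨(exists_walk_length_le_card_misplaced (Classical.arbitrary _) u v).choose⟩

theorem configGraph_dist_le (a : Fin σ) (u v : Words n σ P) :
    (configGraph n σ P).dist u v ≤ n - P a := by
  obtain ⟨p, hp⟩ := exists_walk_length_le_card_misplaced a u v
  calc (configGraph n σ P).dist u v ≤ #(misplaced a u.1 v.1) := (SimpleGraph.dist_le p).trans hp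
    _ ≤ #{k | u.1 k ≠ a} := card_le_card <| monotone_filter_right _ fun _ _ hk => hk.2
    _ = n - P a := by rw [card_filter_ne_eq_sub_parikh, u.2]

theorem card_lt_le_dist [Nonempty (Fin σ)] (u v : Words n σ P) :
    #{k | u.1 k < v.1 k} ≤ (configGraph n σ P).dist u v := by
  obtain ⟨p, hp⟩ := (configGraph_preconnected u v).exists_walk_length_eq_dist
  exact hp ▸ card_lt_le_length p

end ConfigGraph

theorem stmt12_general (n σ : ℕ) (P : Fin σ → ℕ) (hn : ∑ i, P i = n) :
    ∃ w v : Words n σ P,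
      (configGraph n σ P).dist w v = n - Finset.univ.sup P := by
  subst hn
  obtain ⟨w, hw_mono, hw⟩ := exists_monotone_parikh_eq P
  rcases isEmpty_or_nonempty (Fin σ) with hσ | hσ
  · exact ⟨⟨w, hw⟩, ⟨w, hw⟩, by simp⟩
  obtain ⟨a, -, ha⟩ := univ.exists_mem_eq_sup univ_nonempty P
  have hmax : ∀ x, parikh w x ≤ P a := fun x => by rw [hw, ← ha]; exact le_sup (mem_univ x)
  obtain ⟨π, hπ⟩ := exists_perm_card_lt hw_mono hmax
  let u : Words _ σ P := ⟨w, hw⟩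
  let v : Words _ σ P := ⟨w ∘ π, (parikh_comp_perm w π).trans hw⟩
  refine ⟨u, v, ha ▸ le_antisymm (configGraph_dist_le a u v) ?_⟩
  exact hπ.trans (card_lt_le_dist u v)

theorem stmt12 (n σ : ℕ) (P : Fin σ → ℕ) (hn : ∑ i, P i = n)
    (htwo : ∃ i j : Fin σ, i ≠ j ∧ P i ≠ 0 ∧ P j ≠ 0) :
    ∃ w v : Words n σ P,
      (configGraph n σ P).dist w v = n - Finset.univ.sup P :=
  stmt12_general n σ P hn
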